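/- Let (X,p) be a partial metric space, let I be a nontrivial admissible ideal of subsets of ℕ, let r ≥ 0, and let (a_n) and (b_n) be two sequences in X such that p(a_n, b_n) → 0 as n → ∞. If (a_n) is rough I-convergent to a point a ∈ X of roughness degree r and c is a positive real number such that p(a_n, a_n) ≤ c for all n ∈ ℕ, then (b_n) is rough I-convergent to a of roughness degree r + c. -/

import Mathlib

/-- A partial metric on `X` (Matthews): nonnegativity with small self-distances,
indistancy implies equality, symmetry, and the modified triangle inequality. -/
structure IsPartialMetric {X : Type*} (p : X → X → ℝ) : Prop where
  self_nonneg : ∀ x : X, 0 ≤ p x x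
  self_le : ∀ x y : X, p x x ≤ p x y
  eq_iff : ∀ x y : X, x = y ↔ (p x x = p x y ∧ p x y = p y y)
  symm : ∀ x y : X, p x y = p y x
  triangle : ∀ x y z : X, p x y ≤ p x z + p z y - p z z

/-- An ideal of subsets of `ℕ`. -/
structure IsIdeal (I : Set (Set ℕ)) : Prop where
  empty_mem : (∅ : Set ℕ) ∈ I
  union_mem : ∀ A B : Set ℕ, A ∈ I → B ∈ I → A ∪ B ∈ I
  subset_mem : ∀ A B : Set ℕ, A ∈ I → B ⊆ A → B ∈ I

/-- A nontrivial admissible ideal of subsets of `ℕ`. -/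
structure IsAdmissibleIdeal (I : Set (Set ℕ)) extends IsIdeal I : Prop where
  univ_not_mem : (Set.univ : Set ℕ) ∉ I
  ne_empty_singleton : I ≠ {∅}
  singleton_mem : ∀ n : ℕ, ({n} : Set ℕ) ∈ I

/-- `(x n)` is rough `I`-convergent to `x₀` of roughness degree `r` w.r.t. the
partial metric `p`. -/
def RoughIdealConv {X : Type*} (I : Set (Set ℕ)) (p : X → X → ℝ)
    (x : ℕ → X) (r : ℝ) (x₀ : X) : Prop :=
  ∀ ε : ℝ, 0 < ε → {n : ℕ | r + ε ≤ |p (x n) x₀ - p x₀ x₀|} ∈ I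

/- If `p (a n) (b n) → 0`, the modified triangle inequality gives
`|p (b n) x₀ - p (a n) x₀| ≤ p (a n) (b n)`, so outside a finite set the distances of `b n` and
`a n` to `x₀` differ by less than any `ε > 0`. Finite sets lie in an admissible ideal, so `b` is
rough `I`-convergent to `x₀` with the same degree `r` as `a`, and a fortiori with degree `r + c`. -/

section PartialMetric

variable {X : Type*} {p : X → X → ℝ}

theorem IsPartialMetric.abs_sub_le (hp : IsPartialMetric p) (x y z : X) :
    |p y z - p x z| ≤ p x y := by
  have hyx := hp.triangle y z x
  have hxy := hp.triangle x z y
  have hxx := hp.self_nonneg x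
  have hyy := hp.self_nonneg y
  rw [hp.symm y x] at hyx
  rw [abs_le]
  constructor <;> linarith

end PartialMetric

section Ideal

variable {I : Set (Set ℕ)}

theorem IsAdmissibleIdeal.mem_of_finite (hI : IsAdmissibleIdeal I) {s : Set ℕ}
    (hs : s.Finite) : s ∈ I := by
  induction s, hs using Set.Finite.induction_on with
  | empty => exact hI.empty_mem
  | @insert n s _ _ hsI => exact hI.union_mem _ _ (hI.singleton_mem n) hsI

theorem IsIdeal.mem_of_subset_union (hI : IsIdeal I) {s A B : Set ℕ} (hA : A ∈ I)
    (hB : B ∈ I) (hs : s ⊆ A ∪ B) : s ∈ I :=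
  hI.subset_mem _ _ (hI.union_mem _ _ hA hB) hs

end Ideal

section RoughIdealConv

variable {X : Type*} {I : Set (Set ℕ)} {p : X → X → ℝ} {x₀ : X}

theorem RoughIdealConv.mono (hI : IsIdeal I) {x : ℕ → X} {r r' : ℝ}
    (hx : RoughIdealConv I p x r x₀) (hrr' : r ≤ r') : RoughIdealConv I p x r' x₀ :=
  fun ε hε => hI.subset_mem _ _ (hx ε hε) fun _ hn => by
    simp only [Set.mem_ofPred_eq] at hn ⊢
    linarith

theorem RoughIdealConv.of_tendsto_zero (hp : IsPartialMetric p) (hI : IsAdmissibleIdeal I)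
    {a b : ℕ → X} {r : ℝ} (hab : Filter.Tendsto (fun n => p (a n) (b n)) Filter.atTop (nhds 0))
    (ha : RoughIdealConv I p a r x₀) : RoughIdealConv I p b r x₀ := by
  intro ε hε
  have hclose : ∀ᶠ n in Filter.cofinite, p (a n) (b n) < ε / 2 := by
    rw [Nat.cofinite_eq_atTop]
    exact hab.eventually_lt_const (half_pos hε)
  refine hI.mem_of_subset_union (ha (ε / 2) (half_pos hε))
    (hI.mem_of_finite (Filter.eventually_cofinite.mp hclose)) fun n hn => ?_
  by_contra hn'
  simp only [Set.mem_union, Set.mem_ofPred_eq, not_or, not_le, not_lt] at hn hn'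
  have hsub := abs_sub_abs_le_abs_sub (p (b n) x₀ - p x₀ x₀) (p (a n) x₀ - p x₀ x₀)
  rw [sub_sub_sub_cancel_right] at hsub
  linarith [hp.abs_sub_le (a n) (b n) x₀]

end RoughIdealConv

theorem rough_ideal_conv_transfer_degree_general
    {X : Type*} (p : X → X → ℝ) (hp : IsPartialMetric p)
    (I : Set (Set ℕ)) (hI : IsAdmissibleIdeal I)
    (r : ℝ) (a b : ℕ → X)
    (hab : Filter.Tendsto (fun n => p (a n) (b n)) Filter.atTop (nhds 0))
    (x₀ : X) (ha : RoughIdealConv I p a r x₀)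
    (c : ℝ) (hc : 0 < c) :
    RoughIdealConv I p b (r + c) x₀ :=
  (ha.of_tendsto_zero hp hI hab).mono hI.toIsIdeal (le_add_of_nonneg_right hc.le)

theorem rough_ideal_conv_transfer_degree
    {X : Type*} [Nonempty X] (p : X → X → ℝ) (hp : IsPartialMetric p)
    (I : Set (Set ℕ)) (hI : IsAdmissibleIdeal I)
    (r : ℝ) (hr : 0 ≤ r) (a b : ℕ → X)
    (hab : Filter.Tendsto (fun n => p (a n) (b n)) Filter.atTop (nhds 0))
    (x₀ : X) (ha : RoughIdealConv I p a r x₀)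
    (c : ℝ) (hc : 0 < c) (haa : ∀ n : ℕ, p (a n) (a n) ≤ c) :
    RoughIdealConv I p b (r + c) x₀ :=
  rough_ideal_conv_transfer_degree_general p hp I hI r a b hab x₀ ha c hc
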